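/- Let r_H > 0. On U = {(t,r,θ,φ) ∈ ℝ⁴ : r > r_H, 0 < θ < π} consider the metric q̂ with nonzero components q̂_{00} = 1, q̂_{11} = −(1 − r_H/r)^{−1}, q̂_{22} = −r², q̂_{33} = −r² sin²θ. Define its Christoffel symbols Γ^ε_{μν} = (1/2) Σ_α (q̂⁻¹)^{εα}(∂_ν q̂_{αμ} + ∂_μ q̂_{αν} − ∂_α q̂_{μν}), its Ricci tensor R_{μν} = Σ_α ∂_α Γ^α_{μν} − ∂_ν (Σ_α Γ^α_{αμ}) + Σ_{α,β}(Γ^α_{αβ} Γ^β_{μν} − Γ^α_{νβ} Γ^β_{αμ}), and the mixed Ricci tensor R^μ_ν = Σ_λ (q̂⁻¹)^{μλ} R_{λν}. Then R^μ_ν is diagonal, R^0_0 = 0, R^2_2 = R^3_3 = −(1/2) R^1_1, and (R^1_1)² = r_H²/r⁶. -/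

import Mathlib

/-!
The metric `q̂` is diagonal, so its inverse is the diagonal of reciprocals and every Christoffel
symbol `Γ^ε_{μν}` involves the single component `q̂_{εε}`. On the open set where `q̂` is
nondegenerate (with `r = x 1`, `θ = x 2`: `r ≠ 0`, `r ≠ r_H`, `sin θ ≠ 0`) this gives the
Christoffel symbols in closed form; since the set is open, their partial derivatives are those of
the closed forms, and the Ricci tensor comes out diagonal with `R_{00} = 0`,
`R_{11} = -r_H / (r² (r - r_H))`, `R_{22} = r_H / (2r)`, `R_{33} = sin²θ · r_H / (2r)`.
Raising an index gives `R^μ_ν = diag(0, r_H / r³, -r_H / (2r³), -r_H / (2r³))`.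
-/

open scoped BigOperators

/-- Partial derivative with respect to the μ-th coordinate of ℝ⁴. -/
noncomputable def pd (μ : Fin 4) (f : (Fin 4 → ℝ) → ℝ) (x : Fin 4 → ℝ) : ℝ :=
  fderiv ℝ f x (Pi.single μ 1)

/-- Christoffel symbols `Γ^ε_{μν}` of a metric field `g`. -/
noncomputable def christoffel (g : (Fin 4 → ℝ) → Matrix (Fin 4) (Fin 4) ℝ)
    (ε μ ν : Fin 4) (x : Fin 4 → ℝ) : ℝ :=
  (1 / 2) * ∑ α, (g x)⁻¹ ε α *
    (pd ν (fun y => g y α μ) x + pd μ (fun y => g y α ν) x - pd α (fun y => g y μ ν) x)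

/-- Ricci tensor
`R_{μν} = ∂_α Γ^α_{μν} − ∂_ν Γ^α_{αμ} + Γ^α_{αβ}Γ^β_{μν} − Γ^α_{νβ}Γ^β_{αμ}`. -/
noncomputable def ricci (g : (Fin 4 → ℝ) → Matrix (Fin 4) (Fin 4) ℝ)
    (μ ν : Fin 4) (x : Fin 4 → ℝ) : ℝ :=
  (∑ α, pd α (christoffel g α μ ν) x) - pd ν (fun y => ∑ α, christoffel g α α μ y) x
    + ∑ α, ∑ β, (christoffel g α α β x * christoffel g β μ ν x
        - christoffel g α ν β x * christoffel g β α μ x)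

/-- Mixed Ricci tensor `R^μ_ν = q̂^{μλ} R_{λν}`. -/
noncomputable def ricciMixed (g : (Fin 4 → ℝ) → Matrix (Fin 4) (Fin 4) ℝ)
    (μ ν : Fin 4) (x : Fin 4 → ℝ) : ℝ :=
  ∑ lam, (g x)⁻¹ μ lam * ricci g lam ν x

/-- The ultrastatic dragged Schwarzschild metric
`ds² = dt² − (1 − r_H/r)^{−1}dr² − r²(dθ² + sin²θ dφ²)`. -/
noncomputable def qSch (rH : ℝ) (x : Fin 4 → ℝ) : Matrix (Fin 4) (Fin 4) ℝ :=
  !![1, 0, 0, 0;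
     0, -(1 - rH / x 1)⁻¹, 0, 0;
     0, 0, -(x 1) ^ 2, 0;
     0, 0, 0, -(x 1) ^ 2 * Real.sin (x 2) ^ 2]

open Matrix (diagonal diagonal_apply)

lemma pd_congr_of_eventuallyEq {f g : (Fin 4 → ℝ) → ℝ} {x : Fin 4 → ℝ} (h : f =ᶠ[nhds x] g)
    (μ : Fin 4) : pd μ f x = pd μ g x := by
  rw [pd, pd, h.fderiv_eq]

lemma pd_const (c : ℝ) (μ : Fin 4) (x : Fin 4 → ℝ) : pd μ (fun _ => c) x = 0 := by
  simp [pd]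

lemma HasFDerivAt.pd_eq {f : (Fin 4 → ℝ) → ℝ} {L : (Fin 4 → ℝ) →L[ℝ] ℝ} {x : Fin 4 → ℝ}
    (h : HasFDerivAt f L x) (μ : Fin 4) : pd μ f x = L (Pi.single μ 1) := by
  rw [pd, h.fderiv]

lemma hasFDerivAt_comp_apply {A : ℝ → ℝ} {a : ℝ} {x : Fin 4 → ℝ} {i : Fin 4}
    (h : HasDerivAt A a (x i)) :
    HasFDerivAt (fun y : Fin 4 → ℝ => A (y i))
      (a • ContinuousLinearMap.proj (R := ℝ) (φ := fun _ : Fin 4 => ℝ) i) x :=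
  h.comp_hasFDerivAt x (hasFDerivAt_apply i x)

lemma pd_comp_apply {A : ℝ → ℝ} {a : ℝ} {x : Fin 4 → ℝ} {i : Fin 4}
    (h : HasDerivAt A a (x i)) (μ : Fin 4) :
    pd μ (fun y => A (y i)) x = if μ = i then a else 0 := by
  rw [(hasFDerivAt_comp_apply h).pd_eq]
  by_cases hμ : μ = i <;> simp [hμ]

lemma pd_mul {f g : (Fin 4 → ℝ) → ℝ} {x : Fin 4 → ℝ} (hf : DifferentiableAt ℝ f x)
    (hg : DifferentiableAt ℝ g x) (μ : Fin 4) :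
    pd μ (fun y => f y * g y) x = pd μ f x * g x + f x * pd μ g x := by
  simp only [pd, fderiv_fun_mul hf hg, add_apply, smul_apply, smul_eq_mul]
  ring

lemma pd_comp_apply_mul_comp_apply {A B : ℝ → ℝ} {a b : ℝ} {x : Fin 4 → ℝ} {i j : Fin 4}
    (hA : HasDerivAt A a (x i)) (hB : HasDerivAt B b (x j)) (μ : Fin 4) :
    pd μ (fun y => A (y i) * B (y j)) x
      = (if μ = i then a * B (x j) else 0) + (if μ = j then A (x i) * b else 0) := by
  rw [pd_mul (hasFDerivAt_comp_apply hA).differentiableAt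
    (hasFDerivAt_comp_apply hB).differentiableAt, pd_comp_apply hA, pd_comp_apply hB]
  split_ifs <;> ring

section Diagonal

variable {g : (Fin 4 → ℝ) → Matrix (Fin 4) (Fin 4) ℝ} {x : Fin 4 → ℝ} {d : Fin 4 → ℝ}

lemma inv_diagonal_of_ne_zero (hd : ∀ i, d i ≠ 0) : (diagonal d)⁻¹ = diagonal fun i => (d i)⁻¹ :=
  Matrix.inv_eq_left_inv <| by
    rw [Matrix.diagonal_mul_diagonal, ← Matrix.diagonal_one]
    exact congrArg diagonal (funext fun i => inv_mul_cancel₀ (hd i))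

lemma christoffel_of_eq_diagonal (hg : g x = diagonal d) (hd : ∀ i, d i ≠ 0) (ε μ ν : Fin 4) :
    christoffel g ε μ ν x = (d ε)⁻¹ / 2 *
      (pd ν (fun y => g y ε μ) x + pd μ (fun y => g y ε ν) x - pd ε (fun y => g y μ ν) x) := by
  rw [christoffel, hg, inv_diagonal_of_ne_zero hd]
  simp only [one_div, diagonal_apply, ite_mul, zero_mul, Finset.sum_ite_eq, Finset.mem_univ,
    if_true]
  ring

lemma ricciMixed_of_eq_diagonal (hg : g x = diagonal d) (hd : ∀ i, d i ≠ 0) (μ ν : Fin 4) :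
    ricciMixed g μ ν x = (d μ)⁻¹ * ricci g μ ν x := by
  simp [ricciMixed, hg, inv_diagonal_of_ne_zero hd, diagonal_apply]

end Diagonal

open Real

def qSchRegular (rH : ℝ) : Set (Fin 4 → ℝ) := {y | y 1 ≠ 0 ∧ y 1 ≠ rH ∧ sin (y 2) ≠ 0}

lemma isOpen_qSchRegular (rH : ℝ) : IsOpen (qSchRegular rH) :=
  (isOpen_ne_fun (continuous_apply 1) continuous_const).inter <|
    (isOpen_ne_fun (continuous_apply 1) continuous_const).inter <|
      isOpen_ne_fun (continuous_sin.comp (continuous_apply 2)) continuous_const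

lemma qSch_eq_diagonal (rH : ℝ) (y : Fin 4 → ℝ) :
    qSch rH y = diagonal ![1, -(1 - rH / y 1)⁻¹, -(y 1) ^ 2, -(y 1) ^ 2 * sin (y 2) ^ 2] := by
  ext i j
  fin_cases i <;> fin_cases j <;> rfl

lemma one_sub_div_ne_zero {K : Type*} [DivisionRing K] {a b : K} (hb : b ≠ 0) (hab : b ≠ a) :
    1 - a / b ≠ 0 := by
  rw [one_sub_div hb]
  exact div_ne_zero (sub_ne_zero.2 hab) hb

lemma qSch_diagonal_ne_zero {rH : ℝ} {y : Fin 4 → ℝ} (hy : y ∈ qSchRegular rH) :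
    ∀ i, ![1, -(1 - rH / y 1)⁻¹, -(y 1) ^ 2, -(y 1) ^ 2 * sin (y 2) ^ 2] i ≠ 0 := by
  obtain ⟨hr, hrH, hθ⟩ := hy
  intro i
  fin_cases i <;> simp [hr, hθ, one_sub_div_ne_zero hr hrH]

section Derivatives

variable {rH r : ℝ}

lemma hasDerivAt_qSch_11 (hr : r ≠ 0) (hrH : r ≠ rH) :
    HasDerivAt (fun r => -(1 - rH / r)⁻¹) (rH / (r - rH) ^ 2) r := by
  have hu : HasDerivAt (fun s => 1 - rH / s) (rH / r ^ 2) r := by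
    simpa [div_eq_mul_inv] using ((hasDerivAt_inv hr).const_mul rH).const_sub 1
  refine (hu.inv (one_sub_div_ne_zero hr hrH)).neg.congr_deriv ?_
  have hd : r - rH ≠ 0 := sub_ne_zero.2 hrH
  field_simp

lemma hasDerivAt_sin_sq (θ : ℝ) : HasDerivAt (fun θ => sin θ ^ 2) (2 * sin θ * cos θ) θ :=
  ((hasDerivAt_sin θ).fun_pow 2).congr_deriv (by ring)

lemma hasDerivAt_neg_sq (r : ℝ) : HasDerivAt (fun r => -r ^ 2) (-(2 * r)) r :=
  (hasDerivAt_pow 2 r).fun_neg.congr_deriv (by ring)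

lemma hasDerivAt_neg_div_two_mul_mul_sub (hr : r ≠ 0) (hrH : r ≠ rH) :
    HasDerivAt (fun r => -rH / (2 * r * (r - rH)))
      (rH * (2 * r - rH) / (2 * r ^ 2 * (r - rH) ^ 2)) r := by
  have hd : r - rH ≠ 0 := sub_ne_zero.2 hrH
  have hden : HasDerivAt (fun r => 2 * r * (r - rH)) (2 * (r - rH) + 2 * r) r := by
    simpa using ((hasDerivAt_id' r).const_mul 2).fun_mul ((hasDerivAt_id' r).sub_const rH)
  refine ((hasDerivAt_const r (-rH)).fun_div hden (by positivity)).congr_deriv ?_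
  field_simp
  ring

lemma hasDerivAt_neg_sin_mul_cos (θ : ℝ) :
    HasDerivAt (fun θ => -(sin θ * cos θ)) (sin θ ^ 2 - cos θ ^ 2) θ :=
  ((hasDerivAt_sin θ).fun_mul (hasDerivAt_cos θ)).fun_neg.congr_deriv (by ring)

lemma hasDerivAt_cos_div_sin {θ : ℝ} (hθ : sin θ ≠ 0) :
    HasDerivAt (fun θ => cos θ / sin θ) (-(sin θ ^ 2)⁻¹) θ := by
  refine ((hasDerivAt_cos θ).fun_div (hasDerivAt_sin θ) hθ).congr_deriv ?_
  field_simp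
  linear_combination -sin_sq_add_cos_sq θ

end Derivatives

noncomputable def qSchChristoffel (rH : ℝ) (y : Fin 4 → ℝ) : Fin 4 → Fin 4 → Fin 4 → ℝ :=
  ![![![0, 0, 0, 0], ![0, 0, 0, 0], ![0, 0, 0, 0], ![0, 0, 0, 0]],
    ![![0, 0, 0, 0], ![0, -rH / (2 * y 1 * (y 1 - rH)), 0, 0],
      ![0, 0, rH - y 1, 0], ![0, 0, 0, (rH - y 1) * sin (y 2) ^ 2]],
    ![![0, 0, 0, 0], ![0, 0, (y 1)⁻¹, 0], ![0, (y 1)⁻¹, 0, 0],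
      ![0, 0, 0, -(sin (y 2) * cos (y 2))]],
    ![![0, 0, 0, 0], ![0, 0, 0, (y 1)⁻¹],
      ![0, 0, 0, cos (y 2) / sin (y 2)],
      ![0, (y 1)⁻¹, cos (y 2) / sin (y 2), 0]]]

lemma christoffel_qSch {rH : ℝ} {y : Fin 4 → ℝ} (hy : y ∈ qSchRegular rH) (ε μ ν : Fin 4) :
    christoffel (qSch rH) ε μ ν y = qSchChristoffel rH y ε μ ν := by
  rw [christoffel_of_eq_diagonal (qSch_eq_diagonal rH y) (qSch_diagonal_ne_zero hy)]
  obtain ⟨hr, hrH, hθ⟩ := hy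
  have h11 := pd_comp_apply (hasDerivAt_qSch_11 hr hrH)
  have h22 := pd_comp_apply (x := y) (hasDerivAt_neg_sq (y 1))
  have h33 := pd_comp_apply_mul_comp_apply (hasDerivAt_neg_sq (y 1)) (hasDerivAt_sin_sq (y 2))
  fin_cases ε <;> fin_cases μ <;> fin_cases ν <;>
  · simp only [qSch, Matrix.of_apply, Matrix.cons_val', Matrix.cons_val, Matrix.empty_val',
      Matrix.cons_val_fin_one, Fin.zero_eta, Fin.mk_one, Fin.reduceFinMk]
    simp only [h11, h22, h33, pd_const]
    simp [qSchChristoffel] <;> field_simp <;> ring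

lemma sum_qSchChristoffel_self (rH : ℝ) (y : Fin 4 → ℝ) (μ : Fin 4) :
    ∑ α, qSchChristoffel rH y α α μ
      = ![0, -rH / (2 * y 1 * (y 1 - rH)) + 2 * (y 1)⁻¹, cos (y 2) / sin (y 2), 0] μ := by
  fin_cases μ <;> simp [Fin.sum_univ_four, qSchChristoffel]
  ring

noncomputable def qSchRicci (rH : ℝ) (x : Fin 4 → ℝ) : Matrix (Fin 4) (Fin 4) ℝ :=
  diagonal ![0, -rH / ((x 1) ^ 2 * (x 1 - rH)), rH / (2 * x 1), rH / (2 * x 1) * sin (x 2) ^ 2]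

lemma eventually_christoffel_qSch {rH : ℝ} {x : Fin 4 → ℝ} (hx : x ∈ qSchRegular rH) :
    ∀ᶠ y in nhds x, ∀ ε μ ν, christoffel (qSch rH) ε μ ν y = qSchChristoffel rH y ε μ ν :=
  Filter.eventually_of_mem ((isOpen_qSchRegular rH).mem_nhds hx) fun _ hy => christoffel_qSch hy

lemma ricci_qSch {rH : ℝ} {x : Fin 4 → ℝ} (hx : x ∈ qSchRegular rH) (μ ν : Fin 4) :
    ricci (qSch rH) μ ν x = qSchRicci rH x μ ν := by
  have hΓ := eventually_christoffel_qSch hx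
  have hpdΓ (δ ε μ ν : Fin 4) : pd δ (christoffel (qSch rH) ε μ ν) x
      = pd δ (fun y => qSchChristoffel rH y ε μ ν) x :=
    pd_congr_of_eventuallyEq (hΓ.mono fun y hy => hy ε μ ν) δ
  have hpdTrace (δ μ : Fin 4) : pd δ (fun y => ∑ α, christoffel (qSch rH) α α μ y) x
      = pd δ (fun y => ![0, -rH / (2 * y 1 * (y 1 - rH)) + 2 * (y 1)⁻¹,
          cos (y 2) / sin (y 2), 0] μ) x :=
    pd_congr_of_eventuallyEq (hΓ.mono fun y hy => by
      simp only [hy, sum_qSchChristoffel_self]) δ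
  obtain ⟨hr, hrH, hθ⟩ := hx
  have h111 := pd_comp_apply (hasDerivAt_neg_div_two_mul_mul_sub hr hrH)
  have h122 := pd_comp_apply (x := x) ((hasDerivAt_id' (x 1)).const_sub rH)
  have h133 := pd_comp_apply_mul_comp_apply ((hasDerivAt_id' (x 1)).const_sub rH)
    (hasDerivAt_sin_sq (x 2))
  have h212 := pd_comp_apply (hasDerivAt_inv hr)
  have h233 := pd_comp_apply (x := x) (hasDerivAt_neg_sin_mul_cos (x 2))
  have h323 := pd_comp_apply (hasDerivAt_cos_div_sin hθ)
  have htrace := pd_comp_apply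
    ((hasDerivAt_neg_div_two_mul_mul_sub hr hrH).fun_add ((hasDerivAt_inv hr).const_mul 2))
  have hΓx := hΓ.self_of_nhds
  fin_cases μ <;> fin_cases ν <;>
    simp only [ricci, hpdTrace] <;>
    simp only [Fin.sum_univ_four, hpdΓ, hΓx] <;>
    simp only [qSchChristoffel, Matrix.cons_val', Matrix.cons_val, Matrix.empty_val',
      Matrix.cons_val_fin_one, Fin.zero_eta, Fin.mk_one, Fin.reduceFinMk] <;>
    simp only [h111, h122, h133, h212, h233, h323, htrace, pd_const] <;>
    simp [qSchRicci] <;> field_simp <;> grind [sin_sq_add_cos_sq]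

lemma ricciMixed_qSch {rH : ℝ} {x : Fin 4 → ℝ} (hx : x ∈ qSchRegular rH) (μ ν : Fin 4) :
    ricciMixed (qSch rH) μ ν x
      = diagonal ![0, rH / x 1 ^ 3, -rH / (2 * x 1 ^ 3), -rH / (2 * x 1 ^ 3)] μ ν := by
  rw [ricciMixed_of_eq_diagonal (qSch_eq_diagonal rH x) (qSch_diagonal_ne_zero hx),
    ricci_qSch hx, qSchRicci]
  obtain ⟨hr, hrH, hθ⟩ := hx
  rcases eq_or_ne μ ν with rfl | hμν
  · fin_cases μ <;> simp <;> grind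
  · simp [Matrix.diagonal_apply_ne _ hμν]

/-- The mixed Ricci tensor of the dragged Schwarzschild metric is diagonal with
`R^0_0 = 0`, `R^2_2 = R^3_3 = −(1/2)R^1_1` and `(R^1_1)² = r_H²/r⁶`. -/
theorem dragged_schwarzschild_ricci (rH : ℝ) (hrH : 0 < rH) :
    ∀ x : Fin 4 → ℝ, rH < x 1 → 0 < x 2 → x 2 < Real.pi →
      (∀ μ ν : Fin 4, μ ≠ ν → ricciMixed (qSch rH) μ ν x = 0) ∧
      ricciMixed (qSch rH) 0 0 x = 0 ∧
      ricciMixed (qSch rH) 2 2 x = -(1 / 2) * ricciMixed (qSch rH) 1 1 x ∧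
      ricciMixed (qSch rH) 3 3 x = -(1 / 2) * ricciMixed (qSch rH) 1 1 x ∧
      (ricciMixed (qSch rH) 1 1 x) ^ 2 = rH ^ 2 / (x 1) ^ 6 := by
  intro x hr hθ₀ hθπ
  have hx : x ∈ qSchRegular rH :=
    ⟨(hrH.trans hr).ne', hr.ne', (sin_pos_of_pos_of_lt_pi hθ₀ hθπ).ne'⟩
  simp only [ricciMixed_qSch hx]
  refine ⟨fun μ ν h => Matrix.diagonal_apply_ne _ h, ?_, ?_, ?_, ?_⟩ <;> simp <;> ring
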